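/- Minimality of free variables: if Γ ⊢ A is derivable in λα, then FV(A) is defined, FV(A) ⊢ A is derivable, and FV(A) ≤ Γ. -/

import Mathlib

abbrev Var := ℕ
abbrev Ctx := Finset Var × List Var

/-- `Γ,x` : extend the local part with `x` as innermost (rightmost) variable.
Lists represent local contexts with head = outermost (leftmost). -/
def Ctx.snoc (Γ : Ctx) (x : Var) : Ctx := (Γ.1, Γ.2 ++ [x])

/-- The least partial order on contexts generated by
`(G,L) < (G ∪ {x}, L)` for `x ∉ G` and `(G,L) < (G \ {x}, x::L)`. -/
inductive CtxLe : Ctx → Ctx → Prop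
  | refl (Γ : Ctx) : CtxLe Γ Γ
  | trans {Γ Δ Θ : Ctx} : CtxLe Γ Δ → CtxLe Δ Θ → CtxLe Γ Θ
  | glob (G : Finset Var) (L : List Var) (x : Var) (h : x ∉ G) :
      CtxLe (G, L) (insert x G, L)
  | loc (G : Finset Var) (L : List Var) (x : Var) :
      CtxLe (G, L) (G.erase x, x :: L)

def Compatible (Γ Δ : Ctx) : Prop := ∃ Θ, CtxLe Γ Θ ∧ CtxLe Δ Θ

/-- Auxiliary supremum on contexts whose local lists have head = innermost. -/
def supAux : Finset Var → List Var → Finset Var → List Var → Option (Finset Var × List Var)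
  | G₁, [], G₂, [] => some (G₁ ∪ G₂, [])
  | G₁, x :: l₁, G₂, [] =>
      (supAux G₁ l₁ (G₂.erase x) []).map fun p => (p.1, x :: p.2)
  | G₁, [], G₂, x :: l₂ =>
      (supAux (G₁.erase x) [] G₂ l₂).map fun p => (p.1, x :: p.2)
  | G₁, x :: l₁, G₂, y :: l₂ =>
      if x = y then (supAux G₁ l₁ G₂ l₂).map fun p => (p.1, x :: p.2) else none
  termination_by _ l₁ _ l₂ => l₁.length + l₂.length

/-- The (partial) supremum `Γ ⊔ Δ` of two contexts. -/
def ctxSup (Γ Δ : Ctx) : Option Ctx :=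
  (supAux Γ.1 Γ.2.reverse Δ.1 Δ.2.reverse).map fun p => (p.1, p.2.reverse)

/-- The partial operation `O_{λx}` : `O_{λx}(Γ,x) = Γ`, `O_{λx}(G, nil) = (G \ {x}, nil)`,
undefined otherwise. -/
def Olam (x : Var) (Γ : Ctx) : Option Ctx :=
  match Γ.2.reverse with
  | [] => some (Γ.1.erase x, [])
  | y :: l => if y = x then some (Γ.1, l.reverse) else none

mutual
/-- Terms of the calculus λα. -/
inductive Tm : Type
  | var : Var → Tm
  | app : Tm → Tm → Tm
  | lam : Var → Tm → Tm
  | sub : Sb → Tm → Tm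
/-- Substitutions of the calculus λα: `[B/x]`, `Wx`, `{yx}`, `Sₓ`. -/
inductive Sb : Type
  | push : Tm → Var → Sb
  | weak : Var → Sb
  | ren : Var → Var → Sb
  | lift : Sb → Var → Sb
end

mutual
/-- The typing judgement `Γ ⊢ A` of λα (rules R1–R6). -/
inductive Judg : Ctx → Tm → Prop
  | r1 {G : Finset Var} {x : Var} (h : x ∈ G) : Judg (G, []) (.var x)
  | r2 (Γ : Ctx) (x : Var) : Judg (Γ.snoc x) (.var x)
  | r3 {Γ : Ctx} {x y : Var} (h : x ≠ y) : Judg Γ (.var x) → Judg (Γ.snoc y) (.var x)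
  | r4 {Γ A B} : Judg Γ A → Judg Γ B → Judg Γ (.app A B)
  | r5 {Γ x A} : Judg (Ctx.snoc Γ x) A → Judg Γ (.lam x A)
  | r6 {Γ Δ S A} : SJudg Γ S Δ → Judg Δ A → Judg Γ (.sub S A)
/-- The judgement `Γ ⊢ S ▷ Δ` of λα (rules R7–R10). -/
inductive SJudg : Ctx → Sb → Ctx → Prop
  | r7 {Γ B x} : Judg Γ B → SJudg Γ (.push B x) (Γ.snoc x)
  | r8 (Γ x) : SJudg (Ctx.snoc Γ x) (.weak x) Γ
  | r9 (Γ y x) : SJudg (Ctx.snoc Γ y) (.ren y x) (Ctx.snoc Γ x)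
  | r10 {Γ Δ S} (x) : SJudg Γ S Δ → SJudg (Ctx.snoc Γ x) (.lift S x) (Ctx.snoc Δ x)
end

mutual
/-- Weight of a term, used for the termination of `FV`. -/
def wT : Tm → ℕ
  | .var _ => 1
  | .app a b => wT a + wT b + 1
  | .lam _ a => wT a + 1
  | .sub s a => wS s + wT a
/-- Weight of a substitution, used for the termination of `FV`. -/
def wS : Sb → ℕ
  | .weak _ => 1
  | .push b _ => wT b + 4
  | .ren _ _ => 4
  | .lift s _ => wS s + 3
end

/-- The partial free-variable function of λα, valued in contexts. -/
def FV : Tm → Option Ctx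
  | .var x => some ({x}, [])
  | .app A B => do ctxSup (← FV A) (← FV B)
  | .lam x A => do Olam x (← FV A)
  | .sub (.weak x) A => (FV A).map (fun Γ => Ctx.snoc Γ x)
  | .sub (.push B x) A => FV (.app (.lam x A) B)
  | .sub (.ren y x) A => FV (.sub (.weak y) (.lam x A))
  | .sub (.lift S x) A => FV (.sub (.weak x) (.sub S (.lam x A)))
  termination_by t => wT t
  decreasing_by all_goals simp [wT, wS] <;> omega

/-! Induction on the derivation, reading a substitution judgement `Γ ⊢ S ▷ Δ` as the derived rule
"from `Δ ⊢ A` infer `Γ ⊢ S ∘ A`". The order `Φ ≤ Γ` holds exactly when the local list of `Φ` is a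
suffix of that of `Γ` and every global variable of `Φ` is global in `Γ` or occurs in the extra
prefix. Hence two contexts below a common `Γ` have comparable local lists, so their supremum is
defined and still below `Γ`; likewise `O_{λx}` is defined on every context below `Γ,x`. Together
with weakening along `≤` this settles application and abstraction, and the substitution rules
reduce to these through the defining equations of `FV`. -/

def Ctx.dom (Γ : Ctx) : Finset Var := Γ.1 ∪ Γ.2.toFinset

theorem ctxLe_of_subset {G G' : Finset Var} (L : List Var) (h : G ⊆ G') :
    CtxLe (G, L) (G', L) := by
  suffices ∀ S : Finset Var, CtxLe (G, L) (G ∪ S, L) by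
    simpa [Finset.union_eq_right.mpr h] using this G'
  intro S
  induction S using Finset.induction_on with
  | empty => simpa using CtxLe.refl (G, L)
  | @insert a S _ ih =>
    rw [Finset.union_insert]
    by_cases ha : a ∈ G ∪ S
    · rwa [Finset.insert_eq_self.mpr ha]
    · exact ih.trans (CtxLe.glob _ L a ha)

theorem ctxLe_append (G : Finset Var) (L M : List Var) :
    CtxLe (G, L) (G \ M.toFinset, M ++ L) := by
  induction M with
  | nil => simpa using CtxLe.refl (G, L)
  | cons m M ih =>
    rw [List.toFinset_cons, Finset.sdiff_insert, List.cons_append]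
    exact ih.trans (CtxLe.loc _ _ m)

theorem ctxLe_iff {Γ Δ : Ctx} :
    CtxLe Γ Δ ↔ ∃ M, Δ.2 = M ++ Γ.2 ∧ Γ.1 ⊆ Δ.1 ∪ M.toFinset := by
  constructor
  · intro h
    induction h with
    | refl Γ => exact ⟨[], by simp⟩
    | trans _ _ ih₁ ih₂ =>
      obtain ⟨M₁, e₁, s₁⟩ := ih₁
      obtain ⟨M₂, e₂, s₂⟩ := ih₂
      refine ⟨M₂ ++ M₁, by simp [e₂, e₁], fun a ha => ?_⟩
      have := s₁ ha
      simp only [Finset.mem_union, List.mem_toFinset, List.mem_append] at this ⊢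
      rcases this with h | h
      · have := s₂ h
        simp only [Finset.mem_union, List.mem_toFinset] at this
        tauto
      · tauto
    | glob G L x _ => exact ⟨[], by simp, by simp [Finset.subset_insert]⟩
    | loc G L x =>
      refine ⟨[x], by simp, fun a ha => ?_⟩
      by_cases hax : a = x <;> simp [hax, ha]
  · rintro ⟨M, e, s⟩
    obtain ⟨G, L⟩ := Γ
    obtain ⟨G', L'⟩ := Δ
    dsimp only at e s
    subst e
    refine (ctxLe_of_subset L s).trans ((ctxLe_append _ L M).trans (ctxLe_of_subset _ ?_))
    intro a
    simp only [Finset.mem_sdiff, Finset.mem_union]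
    tauto

theorem CtxLe.dom_subset {Γ Δ : Ctx} (h : CtxLe Γ Δ) : Γ.dom ⊆ Δ.dom := by
  obtain ⟨M, e, s⟩ := ctxLe_iff.mp h
  intro a ha
  simp only [Ctx.dom, Finset.mem_union, List.mem_toFinset, e, List.mem_append] at ha ⊢
  rcases ha with ha | ha
  · have := s ha
    simp only [Finset.mem_union, List.mem_toFinset] at this
    tauto
  · tauto

theorem CtxLe.snoc {Γ Δ : Ctx} (h : CtxLe Γ Δ) (x : Var) : CtxLe (Γ.snoc x) (Δ.snoc x) := by
  obtain ⟨M, e, s⟩ := ctxLe_iff.mp h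
  exact ctxLe_iff.mpr ⟨M, by simp [Ctx.snoc, e], s⟩

theorem CtxLe.exists_of_snoc_le {Γ Δ : Ctx} {x : Var} (h : CtxLe (Γ.snoc x) Δ) :
    ∃ Δ', Δ = Δ'.snoc x ∧ CtxLe Γ Δ' := by
  obtain ⟨M, e, s⟩ := ctxLe_iff.mp h
  exact ⟨(Δ.1, M ++ Γ.2), Prod.ext rfl (by simpa [Ctx.snoc] using e), ctxLe_iff.mpr ⟨M, rfl, s⟩⟩

theorem supAux_comm (G₁ : Finset Var) (l₁ : List Var) (G₂ : Finset Var) (l₂ : List Var) :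
    supAux G₁ l₁ G₂ l₂ = supAux G₂ l₂ G₁ l₁ := by
  induction G₁, l₁, G₂, l₂ using supAux.induct with
  | case1 => simp [supAux, Finset.union_comm]
  | case2 _ _ _ _ ih | case3 _ _ _ _ ih => rw [supAux, supAux, ih]
  | case4 _ _ _ _ _ ih => simp [supAux, ih]
  | case5 _ x _ _ y _ hxy => rw [supAux, supAux, if_neg hxy, if_neg (Ne.symm hxy)]

theorem ctxSup_comm (Γ Δ : Ctx) : ctxSup Γ Δ = ctxSup Δ Γ := by
  rw [ctxSup, ctxSup, supAux_comm]

theorem supAux_nil_right (G₁ G₂ : Finset Var) (r : List Var) :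
    supAux G₁ r G₂ [] = some (G₁ ∪ (G₂ \ r.toFinset), r) := by
  induction r generalizing G₂ with
  | nil => simp [supAux]
  | cons x r ih =>
    rw [supAux, ih, List.toFinset_cons, Finset.sdiff_insert, Finset.erase_sdiff_comm]
    rfl

theorem supAux_append_right (G₁ G₂ : Finset Var) (l r : List Var) :
    supAux G₁ (l ++ r) G₂ l = some (G₁ ∪ (G₂ \ r.toFinset), l ++ r) := by
  induction l with
  | nil => simpa using supAux_nil_right G₁ G₂ r
  | cons x l ih => simp [supAux, ih]

theorem ctxSup_append_left (G₁ G₂ : Finset Var) (N L : List Var) :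
    ctxSup (G₁, N ++ L) (G₂, L) = some (G₁ ∪ (G₂ \ N.toFinset), N ++ L) := by
  simp [ctxSup, supAux_append_right]

theorem exists_ctxSup_of_le {Γ Φ₁ Φ₂ : Ctx} (h₁ : CtxLe Φ₁ Γ) (h₂ : CtxLe Φ₂ Γ) :
    ∃ Θ, ctxSup Φ₁ Φ₂ = some Θ ∧ CtxLe Φ₁ Θ ∧ CtxLe Φ₂ Θ ∧ CtxLe Θ Γ := by
  wlog hl : Φ₂.2.length ≤ Φ₁.2.length generalizing Φ₁ Φ₂
  · obtain ⟨Θ, hΘ, le₂, le₁, le⟩ := this h₂ h₁ (by omega)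
    exact ⟨Θ, by rwa [ctxSup_comm], le₁, le₂, le⟩
  obtain ⟨G₁, L₁⟩ := Φ₁
  obtain ⟨G₂, L₂⟩ := Φ₂
  obtain ⟨M₁, e₁, s₁⟩ := ctxLe_iff.mp h₁
  obtain ⟨M₂, e₂, s₂⟩ := ctxLe_iff.mp h₂
  dsimp only at e₁ e₂ s₁ s₂ hl
  obtain ⟨N, rfl⟩ : L₂ <:+ L₁ :=
    List.suffix_of_suffix_length_le ⟨M₂, e₂.symm⟩ ⟨M₁, e₁.symm⟩ hl
  have eM : M₂ = M₁ ++ N := by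
    rw [e₁, ← List.append_assoc] at e₂
    exact (List.append_cancel_right e₂).symm
  refine ⟨_, ctxSup_append_left G₁ G₂ N L₂, ?_, ?_, ?_⟩
  · exact ctxLe_iff.mpr ⟨[], by simp, by simp⟩
  · refine ctxLe_iff.mpr ⟨N, rfl, fun a ha => ?_⟩
    by_cases hn : a ∈ N <;> simp [hn, ha]
  · refine ctxLe_iff.mpr ⟨M₁, e₁, fun a ha => ?_⟩
    rw [Finset.mem_union, Finset.mem_sdiff] at ha
    rcases ha with ha | ⟨ha, hn⟩
    · exact s₁ ha
    · have := s₂ ha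
      simp only [eM, Finset.mem_union, List.mem_toFinset, List.mem_append] at this hn ⊢
      tauto

theorem Judg.mem_dom_of_var {Γ : Ctx} {x : Var} : Judg Γ (.var x) → x ∈ Γ.dom
  | .r1 hx => by simp [Ctx.dom, hx]
  | .r2 _ _ => by simp [Ctx.dom, Ctx.snoc]
  | .r3 _ h => by
    have := h.mem_dom_of_var
    simp only [Ctx.dom, Ctx.snoc, Finset.mem_union, List.mem_toFinset, List.mem_append] at this ⊢
    tauto
termination_by Γ.2.length
decreasing_by simp [Ctx.snoc]

theorem judg_var_iff {Γ : Ctx} {x : Var} : Judg Γ (.var x) ↔ x ∈ Γ.dom := by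
  refine ⟨Judg.mem_dom_of_var, ?_⟩
  obtain ⟨G, L⟩ := Γ
  induction L using List.reverseRecOn with
  | nil => simpa [Ctx.dom] using Judg.r1
  | append_singleton L y ih =>
    intro h
    by_cases hxy : x = y
    · subst hxy
      exact Judg.r2 (G, L) x
    · refine Judg.r3 hxy (ih ?_)
      simp only [Ctx.dom, Finset.mem_union, List.mem_toFinset, List.mem_append,
        List.mem_singleton] at h ⊢
      tauto

mutual

theorem Judg.mono {Γ Δ : Ctx} {A : Tm} (h : Judg Γ A) (hle : CtxLe Γ Δ) : Judg Δ A :=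
  match A, h with
  | .var _, h => judg_var_iff.mpr (hle.dom_subset (judg_var_iff.mp h))
  | _, .r4 hA hB => .r4 (hA.mono hle) (hB.mono hle)
  | _, .r5 hA => .r5 (hA.mono (hle.snoc _))
  | _, .r6 hS hA =>
    let ⟨_, hS', hle'⟩ := hS.mono hle
    .r6 hS' (hA.mono hle')

theorem SJudg.mono {Γ Θ Δ : Ctx} {S : Sb} (h : SJudg Γ S Θ) (hle : CtxLe Γ Δ) :
    ∃ Θ', SJudg Δ S Θ' ∧ CtxLe Θ Θ' :=
  match h with
  | .r7 hB => ⟨_, .r7 (hB.mono hle), hle.snoc _⟩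
  | .r8 _ _ => by
    obtain ⟨Δ', rfl, hle'⟩ := hle.exists_of_snoc_le
    exact ⟨Δ', .r8 Δ' _, hle'⟩
  | .r9 _ _ _ => by
    obtain ⟨Δ', rfl, hle'⟩ := hle.exists_of_snoc_le
    exact ⟨_, .r9 Δ' _ _, hle'.snoc _⟩
  | .r10 _ hS => by
    obtain ⟨Δ', rfl, hle'⟩ := hle.exists_of_snoc_le
    obtain ⟨Θ', hS', hle''⟩ := hS.mono hle'
    exact ⟨_, .r10 _ hS', hle''.snoc _⟩

end

theorem exists_olam_of_le {Γ Φ : Ctx} {x : Var} (h : CtxLe Φ (Γ.snoc x)) :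
    ∃ Ψ, Olam x Φ = some Ψ ∧ CtxLe Φ (Ψ.snoc x) ∧ CtxLe Ψ Γ := by
  obtain ⟨G, L⟩ := Φ
  obtain ⟨M, e, s⟩ := ctxLe_iff.mp h
  dsimp only [Ctx.snoc] at e s
  rcases List.eq_nil_or_concat' L with rfl | ⟨L, y, rfl⟩
  · rw [List.append_nil] at e
    subst e
    refine ⟨(G.erase x, []), by simp [Olam], by simpa [Ctx.snoc] using CtxLe.loc G [] x, ?_⟩
    refine ctxLe_iff.mpr ⟨Γ.2, by simp, fun a ha => ?_⟩
    have := s (Finset.mem_of_mem_erase ha)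
    simp only [Finset.mem_union, List.mem_toFinset, List.mem_append, List.mem_singleton]
      at this ⊢
    have := Finset.ne_of_mem_erase ha
    tauto
  · rw [← List.append_assoc] at e
    obtain ⟨hL, ⟨⟩⟩ := List.append_inj' e rfl
    exact ⟨(G, L), by simp [Olam], CtxLe.refl _, ctxLe_iff.mpr ⟨M, hL, s⟩⟩

def FVBelow (Γ : Ctx) (A : Tm) : Prop :=
  ∃ Φ, FV A = some Φ ∧ Judg Φ A ∧ CtxLe Φ Γ

namespace FVBelow

variable {Γ Δ : Ctx} {A B : Tm} {x y : Var}

theorem var (h : Judg Γ (.var x)) : FVBelow Γ (.var x) := by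
  refine ⟨({x}, []), by rw [FV], Judg.r1 (Finset.mem_singleton_self x),
    ctxLe_iff.mpr ⟨Γ.2, by simp, ?_⟩⟩
  simpa [Ctx.dom] using judg_var_iff.mp h

theorem app (hA : FVBelow Γ A) (hB : FVBelow Γ B) : FVBelow Γ (.app A B) := by
  obtain ⟨Φ₁, fA, jA, le₁⟩ := hA
  obtain ⟨Φ₂, fB, jB, le₂⟩ := hB
  obtain ⟨Θ, hΘ, le₁Θ, le₂Θ, leΘ⟩ := exists_ctxSup_of_le le₁ le₂
  exact ⟨Θ, by simp [FV, fA, fB, hΘ], .r4 (jA.mono le₁Θ) (jB.mono le₂Θ), leΘ⟩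

theorem lam (hA : FVBelow (Γ.snoc x) A) : FVBelow Γ (.lam x A) := by
  obtain ⟨Φ, fA, jA, le⟩ := hA
  obtain ⟨Ψ, hΨ, leΦ, leΨ⟩ := exists_olam_of_le le
  exact ⟨Ψ, by simp [FV, fA, hΨ], .r5 (jA.mono leΦ), leΨ⟩

theorem weak (hA : FVBelow Γ A) : FVBelow (Γ.snoc x) (.sub (.weak x) A) := by
  obtain ⟨Φ, fA, jA, le⟩ := hA
  exact ⟨Φ.snoc x, by simp [FV, fA], .r6 (.r8 Φ x) jA, le.snoc x⟩

theorem of_FV_eq {A' : Tm} (hFV : FV A = FV A') (hJ : ∀ Φ, Judg Φ A' → Judg Φ A)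
    (h : FVBelow Γ A') : FVBelow Γ A := by
  obtain ⟨Φ, f, j, le⟩ := h
  exact ⟨Φ, hFV ▸ f, hJ Φ j, le⟩

theorem push (hA : FVBelow (Γ.snoc x) A) (hB : FVBelow Γ B) :
    FVBelow Γ (.sub (.push B x) A) :=
  of_FV_eq (FV.eq_5 B x A) (fun _ h => match h with | .r4 (.r5 jA) jB => .r6 (.r7 jB) jA)
    (hA.lam.app hB)

theorem ren (hA : FVBelow (Γ.snoc x) A) : FVBelow (Γ.snoc y) (.sub (.ren y x) A) :=
  of_FV_eq (FV.eq_6 y x A)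
    (fun _ h => match h with | .r6 (.r8 Φ _) (.r5 jA) => .r6 (.r9 Φ y x) jA)
    hA.lam.weak

theorem lift {S : Sb} (hS : ∀ A, FVBelow Δ A → FVBelow Γ (.sub S A))
    (hA : FVBelow (Δ.snoc x) A) : FVBelow (Γ.snoc x) (.sub (.lift S x) A) :=
  of_FV_eq (FV.eq_7 S x A)
    (fun _ h => match h with | .r6 (.r8 _ _) (.r6 jS (.r5 jA)) => .r6 (.r10 x jS) jA)
    (hS _ hA.lam).weak

end FVBelow

mutual

theorem Judg.fvBelow {Γ : Ctx} {A : Tm} : Judg Γ A → FVBelow Γ A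
  | h@(.r1 _) | h@(.r2 _ _) | h@(.r3 _ _) => .var h
  | .r4 hA hB => hA.fvBelow.app hB.fvBelow
  | .r5 hA => hA.fvBelow.lam
  | .r6 hS hA => hS.fvBelow_sub _ hA.fvBelow

theorem SJudg.fvBelow_sub {Γ Δ : Ctx} {S : Sb} :
    SJudg Γ S Δ → ∀ A, FVBelow Δ A → FVBelow Γ (.sub S A)
  | .r7 hB => fun _ hA => hA.push hB.fvBelow
  | .r8 _ _ => fun _ hA => hA.weak
  | .r9 _ _ _ => fun _ hA => hA.ren
  | .r10 x hS => fun _ hA => FVBelow.lift hS.fvBelow_sub hA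

end

/-- Minimality of free variables: if `Γ ⊢ A` then `FV(A)` is defined,
`FV(A) ⊢ A` is derivable, and `FV(A) ≤ Γ`. -/
theorem FV_min (Γ : Ctx) (A : Tm) (h : Judg Γ A) :
    ∃ Φ : Ctx, FV A = some Φ ∧ Judg Φ A ∧ CtxLe Φ Γ :=
  h.fvBelow
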